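/- arXiv:2210.09409 — 2 statements merged into one kernel-verified Lean document; each statement's English description precedes it below -/
import Mathlib

section
/- Let ψ : ℕ → ℝ^d be a bounded sequence of vectors and θ̌ ∈ ℝ^d a fixed vector such that the scalar sequence Q(k) := ⟨θ̌, ψ(k)⟩ is non-decreasing in k. Suppose the Cesàro limits ψ̄ := lim_{N→∞} (1/N) Σ_{k=0}^{N-1} ψ(k) and R := lim_{N→∞} (1/N) Σ_{k=0}^{N-1} ψ(k)ψ(k)ᵀ exist. Then the covariance matrix Σ := R − ψ̄ψ̄ᵀ satisfies Σ θ̌ = 0. In particular, if θ̌ ≠ 0, then Σ is not invertible. -/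
open Filter Finset Matrix

theorem stmt0 {d : ℕ} (ψ : ℕ → Fin d → ℝ) (θ : Fin d → ℝ) (B : ℝ)
    (hbound : ∀ k, ‖ψ k‖ ≤ B)
    (hmono : Monotone fun k => θ ⬝ᵥ ψ k)
    (ψbar : Fin d → ℝ) (R : Matrix (Fin d) (Fin d) ℝ)
    (hψbar : Tendsto (fun N : ℕ => (N : ℝ)⁻¹ • ∑ k ∈ range N, ψ k) atTop (nhds ψbar))
    (hR : Tendsto (fun N : ℕ => (N : ℝ)⁻¹ • ∑ k ∈ range N, Matrix.vecMulVec (ψ k) (ψ k))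
      atTop (nhds R)) :
    (R - Matrix.vecMulVec ψbar ψbar).mulVec θ = 0 ∧
      (θ ≠ 0 → ¬ IsUnit (R - Matrix.vecMulVec ψbar ψbar)) := by
  set Q : ℕ → ℝ := fun k => θ ⬝ᵥ ψ k with hQ
  -- Q is bounded
  have hQbd : ∀ k, |Q k| ≤ (∑ j, |θ j|) * B := by
    intro k
    calc |Q k| ≤ ∑ j, |θ j * ψ k j| := by
          simpa [Q, dotProduct] using Finset.abs_sum_le_sum_abs (fun j => θ j * ψ k j) univ
      _ ≤ ∑ j, |θ j| * B := by
          refine Finset.sum_le_sum fun j _ => ?_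
          rw [abs_mul]
          exact mul_le_mul_of_nonneg_left
            ((norm_le_pi_norm (ψ k) j).trans (hbound k)) (abs_nonneg _)
      _ = (∑ j, |θ j|) * B := by rw [Finset.sum_mul]
  have hbdd : BddAbove (Set.range Q) := by
    refine ⟨(∑ j, |θ j|) * B, ?_⟩
    rintro x ⟨k, rfl⟩
    exact (le_abs_self _).trans (hQbd k)
  set L : ℝ := ⨆ k, Q k with hL
  have hQL : Tendsto Q atTop (nhds L) := tendsto_atTop_ciSup hmono hbdd
  -- the linear map M ↦ M.mulVec θ
  let f : Matrix (Fin d) (Fin d) ℝ →ₗ[ℝ] (Fin d → ℝ) :=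
    { toFun := fun M => M.mulVec θ
      map_add' := fun A C => Matrix.add_mulVec A C θ
      map_smul' := fun c M => (Matrix.smul_mulVec c M θ) }
  have hfc : Continuous f := f.continuous_of_finiteDimensional
  -- vecMulVec mulVec computation
  have hvmv : ∀ a b : Fin d → ℝ, (Matrix.vecMulVec a b).mulVec θ = (b ⬝ᵥ θ) • a := by
    intro a b
    funext i
    simp only [Matrix.mulVec, Matrix.vecMulVec, dotProduct, Pi.smul_apply, smul_eq_mul,
      Matrix.of_apply]
    rw [Finset.sum_mul]
    exact Finset.sum_congr rfl fun j _ => by ring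
  -- θ ⬝ᵥ ψbar = L
  have hdotc : Continuous fun v : Fin d → ℝ => θ ⬝ᵥ v := by
    unfold dotProduct
    exact continuous_finset_sum _ fun j _ => continuous_const.mul (continuous_apply j)
  have h1 : Tendsto (fun N : ℕ => θ ⬝ᵥ ((N : ℝ)⁻¹ • ∑ k ∈ range N, ψ k)) atTop
      (nhds (θ ⬝ᵥ ψbar)) := (hdotc.tendsto ψbar).comp hψbar
  have h2 : (fun N : ℕ => θ ⬝ᵥ ((N : ℝ)⁻¹ • ∑ k ∈ range N, ψ k))
      = fun N : ℕ => (N : ℝ)⁻¹ • ∑ k ∈ range N, Q k := by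
    funext N
    rw [dotProduct_smul]
    congr 1
    simp only [Q, dotProduct, Finset.sum_apply, Finset.mul_sum]
    exact Finset.sum_comm
  have hdotbar : θ ⬝ᵥ ψbar = L := by
    rw [h2] at h1
    exact tendsto_nhds_unique h1 hQL.cesaro
  -- R.mulVec θ = L • ψbar
  have hRmul : Tendsto (fun N : ℕ => f ((N : ℝ)⁻¹ • ∑ k ∈ range N, Matrix.vecMulVec (ψ k) (ψ k)))
      atTop (nhds (f R)) := (hfc.tendsto R).comp hR
  have h3 : (fun N : ℕ => f ((N : ℝ)⁻¹ • ∑ k ∈ range N, Matrix.vecMulVec (ψ k) (ψ k)))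
      = fun N : ℕ => (N : ℝ)⁻¹ • ∑ k ∈ range N, (Q k) • ψ k := by
    funext N
    rw [LinearMap.map_smul, map_sum]
    congr 1
    refine Finset.sum_congr rfl fun k _ => ?_
    show (Matrix.vecMulVec (ψ k) (ψ k)).mulVec θ = Q k • ψ k
    rw [hvmv, dotProduct_comm]
  -- split: Q k • ψ k = (Q k - L) • ψ k + L • ψ k
  have hsplit : Tendsto (fun N : ℕ => (N : ℝ)⁻¹ • ∑ k ∈ range N, (Q k) • ψ k) atTop
      (nhds (L • ψbar)) := by
    have hA : Tendsto (fun N : ℕ => (N : ℝ)⁻¹ • ∑ k ∈ range N, (Q k - L) • ψ k) atTop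
        (nhds 0) := by
      refine squeeze_zero_norm (a := fun N : ℕ => (N : ℝ)⁻¹ • ∑ k ∈ range N, |Q k - L| * B) (fun N => ?_) ?_
      · calc ‖(N : ℝ)⁻¹ • ∑ k ∈ range N, (Q k - L) • ψ k‖
            ≤ (N : ℝ)⁻¹ * ‖∑ k ∈ range N, (Q k - L) • ψ k‖ := by
              rw [norm_smul]
              gcongr
              simp [abs_nonneg]
          _ ≤ (N : ℝ)⁻¹ * ∑ k ∈ range N, |Q k - L| * B := by
              gcongr
              refine (norm_sum_le _ _).trans (Finset.sum_le_sum fun k _ => ?_)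
              rw [norm_smul]
              have h0 : (0:ℝ) ≤ |Q k - L| := abs_nonneg _
              exact mul_le_mul_of_nonneg_left (hbound k) (by simp [h0])
          _ = (N : ℝ)⁻¹ • ∑ k ∈ range N, |Q k - L| * B := rfl
      · have : Tendsto (fun k => |Q k - L| * B) atTop (nhds 0) := by
          have := ((hQL.sub (tendsto_const_nhds (x := L))).abs).mul_const B
          simpa using this
        simpa using this.cesaro_smul
    have hB : Tendsto (fun N : ℕ => (N : ℝ)⁻¹ • ∑ k ∈ range N, L • ψ k) atTop
        (nhds (L • ψbar)) := by
      have := hψbar.const_smul L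
      refine this.congr fun N => ?_
      rw [← Finset.smul_sum, smul_comm]
    have := hA.add hB
    simp only [zero_add] at this
    refine this.congr fun N => ?_
    rw [← smul_add, ← Finset.sum_add_distrib]
    congr 1
    refine Finset.sum_congr rfl fun k _ => ?_
    rw [← add_smul, sub_add_cancel]
  have hRθ : R.mulVec θ = L • ψbar := by
    rw [h3] at hRmul
    exact tendsto_nhds_unique hRmul hsplit
  have key : (R - Matrix.vecMulVec ψbar ψbar).mulVec θ = 0 := by
    rw [Matrix.sub_mulVec, hRθ, hvmv, dotProduct_comm, hdotbar, sub_self]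
  refine ⟨key, fun hθ hU => ?_⟩
  obtain ⟨u, hu⟩ := hU
  apply hθ
  have : (↑u⁻¹ : Matrix (Fin d) (Fin d) ℝ).mulVec ((R - Matrix.vecMulVec ψbar ψbar).mulVec θ) = θ := by
    rw [Matrix.mulVec_mulVec, ← hu, Units.inv_mul, Matrix.one_mulVec]
  rw [key, Matrix.mulVec_zero] at this
  exact this.symm
end

section
/- Fix d, N ∈ ℕ and data: vectors ψ_k ∈ ℝ^d and costs c_k ∈ ℝ for 0 ≤ k ≤ N, and for each k a finite nonempty set of 'action' vectors giving Q̲^θ(k) := min over actions u of ⟨θ, ψ(x(k), u)⟩, with ψ(x(k), u(k)) = ψ_k. Define D_k(θ) := −⟨θ, ψ_{k−1}⟩ + c_{k−1} + Q̲^θ(k) for 1 ≤ k ≤ N, and Γ_N(θ) := (1/N) Σ_{k=1}^N max(0, −D_k(θ)). Suppose for every m ≥ 1 there exists θ^m with ‖θ^m‖ ≥ m and Γ_N(θ^m) ≤ Tol. Then there exists θ̌ with ‖θ̌‖ = 1 such that ⟨θ̌, ψ_{k−1}⟩ ≤ Q̲^{θ̌}(k) ≤ ⟨θ̌, ψ_k⟩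 for all 1 ≤ k ≤ N; in particular ⟨θ̌, ψ_k⟩ is non-decreasing in k. -/
open Finset

local notation "⟪" x ", " y "⟫" => @inner ℝ _ _ x y

private lemma inf'_smul_inner {E : Type*} [NormedAddCommGroup E] [InnerProductSpace ℝ E]
    (s : Finset E) (hs : s.Nonempty) (θ : E) {r : ℝ} (hr : 0 ≤ r) :
    (s.inf' hs fun a => ⟪r • θ, a⟫) = r * s.inf' hs fun a => ⟪θ, a⟫ := by
  apply le_antisymm
  · obtain ⟨b, hb, hbe⟩ := s.exists_mem_eq_inf' hs (fun a => ⟪θ, a⟫)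
    rw [hbe]
    calc (s.inf' hs fun a => ⟪r • θ, a⟫) ≤ ⟪r • θ, b⟫ := Finset.inf'_le _ hb
    _ = r * ⟪θ, b⟫ := real_inner_smul_left _ _ _
  · apply Finset.le_inf'
    intro b hb
    rw [real_inner_smul_left]
    exact mul_le_mul_of_nonneg_left (Finset.inf'_le _ hb) hr

/-- key lemma for boundedness of the convex Q-learning constraint
region. -/
theorem stmt2 {d : ℕ} (N : ℕ) (hN : 1 ≤ N) (Tol : ℝ)
    (ψ : ℕ → EuclideanSpace ℝ (Fin d)) (c : ℕ → ℝ)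
    (A : ℕ → Finset (EuclideanSpace ℝ (Fin d)))
    (hA : ∀ k, (A k).Nonempty)
    (hmem : ∀ k, ψ k ∈ A k)
    (hub : ∀ m : ℕ, 1 ≤ m → ∃ θ : EuclideanSpace ℝ (Fin d), (m : ℝ) ≤ ‖θ‖ ∧
      (N : ℝ)⁻¹ * ∑ k ∈ Icc 1 N,
        max 0 (-(-⟪θ, ψ (k - 1)⟫ + c (k - 1) +
          ((A k).inf' (hA k) fun a => ⟪θ, a⟫))) ≤ Tol) :
    ∃ θ : EuclideanSpace ℝ (Fin d), ‖θ‖ = 1 ∧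
      ∀ k ∈ Icc 1 N,
        ⟪θ, ψ (k - 1)⟫ ≤ ((A k).inf' (hA k) fun a => ⟪θ, a⟫) ∧
        ((A k).inf' (hA k) fun a => ⟪θ, a⟫) ≤ ⟪θ, ψ k⟫ := by
  have h : ∀ n : ℕ, ∃ θ : EuclideanSpace ℝ (Fin d), ((n + 1 : ℕ) : ℝ) ≤ ‖θ‖ ∧
      (N : ℝ)⁻¹ * ∑ k ∈ Icc 1 N,
        max 0 (-(-⟪θ, ψ (k - 1)⟫ + c (k - 1) +
          ((A k).inf' (hA k) fun a => ⟪θ, a⟫))) ≤ Tol := fun n => hub (n + 1) (by omega)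
  choose T hT1 hT2 using h
  have hTn1 : ∀ n : ℕ, ((n : ℝ) + 1) ≤ ‖T n‖ := by
    intro n; have := hT1 n; push_cast at this; linarith
  have hTpos : ∀ n, (0 : ℝ) < ‖T n‖ := fun n =>
    lt_of_lt_of_le (by positivity) (hTn1 n)
  set u : ℕ → EuclideanSpace ℝ (Fin d) := fun n => ‖T n‖⁻¹ • T n with hu
  have hunorm : ∀ n, ‖u n‖ = 1 := by
    intro n
    rw [hu]
    simp only [norm_smul, norm_inv, norm_norm]
    exact inv_mul_cancel₀ (hTpos n).ne'
  have husphere : ∀ n, u n ∈ Metric.sphere (0 : EuclideanSpace ℝ (Fin d)) 1 := by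
    intro n; simpa using hunorm n
  obtain ⟨x, hxs, φ, hφ, hxlim⟩ :=
    (isCompact_sphere (0 : EuclideanSpace ℝ (Fin d)) 1).tendsto_subseq husphere
  have hxnorm : ‖x‖ = 1 := by simpa using hxs
  refine ⟨x, hxnorm, ?_⟩
  intro k hk
  have heasy : ((A k).inf' (hA k) fun a => ⟪x, a⟫) ≤ ⟪x, ψ k⟫ :=
    Finset.inf'_le _ (hmem k)
  refine ⟨?_, heasy⟩
  set f : EuclideanSpace ℝ (Fin d) → ℝ := fun θ =>
    max 0 (⟪θ, ψ (k - 1)⟫ - (A k).inf' (hA k) fun a => ⟪θ, a⟫) with hf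
  have hfcont : Continuous f := by
    apply Continuous.max continuous_const
    apply Continuous.sub
    · exact (continuous_id.inner continuous_const)
    · exact Continuous.finset_inf'_apply (hA k) fun a _ =>
        continuous_id.inner continuous_const
  have hfnonneg : ∀ θ, 0 ≤ f θ := fun θ => le_max_left _ _
  -- bound on f (T n)
  have hfbound : ∀ n, f (T n) ≤ N * Tol + |c (k - 1)| := by
    intro n
    have hNpos : (0 : ℝ) < N := by exact_mod_cast hN
    have hsum : ∑ j ∈ Icc 1 N,
        max 0 (-(-⟪T n, ψ (j - 1)⟫ + c (j - 1) +
          ((A j).inf' (hA j) fun a => ⟪T n, a⟫))) ≤ N * Tol := by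
      have h2 := hT2 n
      rw [inv_mul_le_iff₀ hNpos] at h2
      linarith
    have hterm : max 0 (-(-⟪T n, ψ (k - 1)⟫ + c (k - 1) +
        ((A k).inf' (hA k) fun a => ⟪T n, a⟫))) ≤ N * Tol :=
      le_trans (Finset.single_le_sum (f := fun j =>
        max 0 (-(-⟪T n, ψ (j - 1)⟫ + c (j - 1) +
          ((A j).inf' (hA j) fun a => ⟪T n, a⟫)))) (fun j _ => le_max_left _ _) hk) hsum
    rw [hf]
    simp only [max_le_iff]
    have habs : c (k - 1) ≤ |c (k - 1)| := le_abs_self _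
    have h0 : (0:ℝ) ≤ max 0 (-(-⟪T n, ψ (k - 1)⟫ + c (k - 1) +
        ((A k).inf' (hA k) fun a => ⟪T n, a⟫))) := le_max_left _ _
    have h2 : -(-⟪T n, ψ (k - 1)⟫ + c (k - 1) +
        ((A k).inf' (hA k) fun a => ⟪T n, a⟫)) ≤ max 0 (-(-⟪T n, ψ (k - 1)⟫ + c (k - 1) +
        ((A k).inf' (hA k) fun a => ⟪T n, a⟫))) := le_max_right _ _
    have habs0 : (0:ℝ) ≤ |c (k - 1)| := abs_nonneg _
    constructor <;> linarith
  set C : ℝ := N * Tol + |c (k - 1)| with hC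
  have hCnonneg : 0 ≤ C := le_trans (hfnonneg (T 0)) (hfbound 0)
  -- homogeneity
  have hfhom : ∀ n, f (u n) = ‖T n‖⁻¹ * f (T n) := by
    intro n
    rw [hf, hu]
    simp only
    rw [inf'_smul_inner _ _ _ (by positivity : (0:ℝ) ≤ ‖T n‖⁻¹), real_inner_smul_left,
      ← mul_sub, eq_comm, mul_max_of_nonneg _ _ (by positivity : (0:ℝ) ≤ ‖T n‖⁻¹), mul_zero]
  -- f (u (φ j)) → 0
  have hblim : Filter.Tendsto (fun j : ℕ => ((j : ℝ) + 1)⁻¹ * C) Filter.atTop (nhds 0) := by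
    have := (tendsto_one_div_add_atTop_nhds_zero_nat).mul_const C
    simpa [one_div] using this
  have hlim0 : Filter.Tendsto (fun j => f (u (φ j))) Filter.atTop (nhds 0) := by
    refine squeeze_zero (fun j => hfnonneg _) (fun j => ?_) hblim
    rw [hfhom]
    have h1 : ‖T (φ j)‖⁻¹ * f (T (φ j)) ≤ ‖T (φ j)‖⁻¹ * C :=
      mul_le_mul_of_nonneg_left (hfbound _) (by positivity)
    have h2 : ‖T (φ j)‖⁻¹ ≤ ((φ j : ℝ) + 1)⁻¹ := by
      apply inv_anti₀ (by positivity) (hTn1 _)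
    have h3 : ((φ j : ℝ) + 1)⁻¹ ≤ ((j : ℝ) + 1)⁻¹ := by
      apply inv_anti₀ (by positivity)
      have hj : j ≤ φ j := hφ.le_apply
      have : (j : ℝ) ≤ (φ j : ℝ) := by exact_mod_cast hj
      linarith
    calc ‖T (φ j)‖⁻¹ * f (T (φ j)) ≤ ‖T (φ j)‖⁻¹ * C := h1
      _ ≤ ((φ j : ℝ) + 1)⁻¹ * C := mul_le_mul_of_nonneg_right h2 hCnonneg
      _ ≤ ((j : ℝ) + 1)⁻¹ * C := mul_le_mul_of_nonneg_right h3 hCnonneg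
  have hlimx : Filter.Tendsto (fun j => f (u (φ j))) Filter.atTop (nhds (f x)) :=
    (hfcont.continuousAt.tendsto).comp hxlim
  have hfx : f x = 0 := tendsto_nhds_unique hlimx hlim0
  rw [hf] at hfx
  simp only [max_eq_left_iff] at hfx
  linarith [hfx]
end
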